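/- For integers k ≥ 1 and n ≥ 1, let χ_n be the characteristic function of the interval u_1^{k−1}(v_n([0,1))) (where u_1^{k−1} denotes the (k−1)-fold iterate of u_1, with u_1^0 = id). Then for every x ∈ [0,1), (Lᵏ χ_n)(x) = a_n (1 + 2cos²(2πn⁴x)) (|J|/N)^{k−1}. -/

import Mathlib

/-!
The branches are strictly increasing and send `[0,1)` into pairwise disjoint intervals:
`v_n` into `[b_{n-1}, b_{n-1} + 2a_n)` and `w_n` into `[b_{n-1} + 2a_n, b_n)` (the primitive of
`1 + 2cos²(2πn⁴t)` is `2t + sin(4πn⁴t)/(4πn⁴)`, which takes the value `2` at `t = 1`), and `u_j`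
into the `j`-th subinterval of `J` of length `|J|/N`. So if `f` vanishes off the image of one
branch `φ`, then `L f = φ' · (f ∘ φ)` on `[0,1)`; for `f = 1_{φ(S)}` this is `φ' · 1_S`.
Applying this `k - 1` times with `φ = u_1`, whose derivative is the constant `|J|/N`, and once
with `φ = v_n` gives the formula. Since all branches map `[0,1)` into itself, `L f` on `[0,1)`
only depends on `f` on `[0,1)`, which lets the identities valid on `[0,1)` be iterated.
-/

open MeasureTheory Set Filter

noncomputable section

namespace Gouezel

/-- `b a n = 4 * ∑_{k=1}^n a_k` (left endpoints of the intervals `I_n`). -/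
def b (a : ℕ → ℝ) (n : ℕ) : ℝ := 4 * ∑ k ∈ Finset.range n, a (k + 1)

/-- `b_∞ = 4 * ∑_{n=1}^∞ a_n`. -/
def binf (a : ℕ → ℝ) : ℝ := 4 * ∑' n : ℕ, a (n + 1)

/-- The length `|J| = 1 - b_∞` of the interval `J = [b_∞, 1)`. -/
def lenJ (a : ℕ → ℝ) : ℝ := 1 - binf a

/-- `v_n'(x) = a_n (1 + 2 cos²(2π n⁴ x))`. -/
def vd (a : ℕ → ℝ) (n : ℕ) (x : ℝ) : ℝ :=
  a n * (1 + 2 * Real.cos (2 * Real.pi * (n : ℝ) ^ 4 * x) ^ 2)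

/-- `w_n'(x) = a_n (1 + 2 sin²(2π n⁴ x))`. -/
def wd (a : ℕ → ℝ) (n : ℕ) (x : ℝ) : ℝ :=
  a n * (1 + 2 * Real.sin (2 * Real.pi * (n : ℝ) ^ 4 * x) ^ 2)

/-- The inverse branch `v_n(x) = b_{n-1} + ∫_0^x v_n'(t) dt`. -/
def v (a : ℕ → ℝ) (n : ℕ) (x : ℝ) : ℝ := b a (n - 1) + ∫ t in (0:ℝ)..x, vd a n t

/-- The inverse branch `w_n(x) = b_{n-1} + 2 a_n + ∫_0^x w_n'(t) dt`. -/
def w (a : ℕ → ℝ) (n : ℕ) (x : ℝ) : ℝ :=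
  b a (n - 1) + 2 * a n + ∫ t in (0:ℝ)..x, wd a n t

/-- The affine inverse branches `u_j(x) = b_∞ + (j-1)|J|/N + (|J|/N) x`, `1 ≤ j ≤ N`. -/
def u (a : ℕ → ℝ) (N : ℕ) (j : ℕ) (x : ℝ) : ℝ :=
  binf a + ((j : ℝ) - 1) * (lenJ a / N) + (lenJ a / N) * x

/-- The transfer operator on complex-valued functions. -/
def L (a : ℕ → ℝ) (N : ℕ) (f : ℝ → ℂ) (x : ℝ) : ℂ :=
  (∑' n : ℕ, ((vd a (n + 1) x : ℂ) * f (v a (n + 1) x)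
      + (wd a (n + 1) x : ℂ) * f (w a (n + 1) x)))
    + ((lenJ a / (N : ℝ) : ℝ) : ℂ) * ∑ j ∈ Finset.range N, f (u a N (j + 1) x)

/-- The transfer operator on real-valued functions. -/
def LR (a : ℕ → ℝ) (N : ℕ) (f : ℝ → ℝ) (x : ℝ) : ℝ :=
  (∑' n : ℕ, (vd a (n + 1) x * f (v a (n + 1) x) + wd a (n + 1) x * f (w a (n + 1) x)))
    + (lenJ a / N) * ∑ j ∈ Finset.range N, f (u a N (j + 1) x)

/-- The part `L_n` of the transfer operator coming from the branches `v_n, w_n`. -/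
def Ln (a : ℕ → ℝ) (n : ℕ) (f : ℝ → ℂ) (x : ℝ) : ℂ :=
  (vd a n x : ℂ) * f (v a n x) + (wd a n x : ℂ) * f (w a n x)

/-- Sup norm of `f` on `[0,1)`. -/
def supNorm (f : ℝ → ℂ) : ℝ := ⨆ x : Ico (0:ℝ) 1, ‖f x.1‖

/-- Best Lipschitz constant of `f` on `[0,1)` (the term at `x = y` is `0/0 = 0`). -/
def lipConst (f : ℝ → ℂ) : ℝ :=
  ⨆ p : Ico (0:ℝ) 1 × Ico (0:ℝ) 1, ‖f p.1.1 - f p.2.1‖ / |p.1.1 - p.2.1|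

/-- Lipschitz norm `‖f‖_Lip = sup|f| + Lip(f)` on `[0,1)`. -/
def lipNorm (f : ℝ → ℂ) : ℝ := supNorm f + lipConst f

/-- `f` is bounded and Lipschitz on `[0,1)`. -/
def BddLip (f : ℝ → ℂ) : Prop :=
  ∃ K : ℝ, (∀ x ∈ Ico (0:ℝ) 1, ‖f x‖ ≤ K) ∧
    ∀ x ∈ Ico (0:ℝ) 1, ∀ y ∈ Ico (0:ℝ) 1, ‖f x - f y‖ ≤ K * |x - y|

/-- The specific choice `a_n = 1/(100 n³)`. -/
def aa (n : ℕ) : ℝ := 1 / (100 * (n : ℝ) ^ 3)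

/-- Standing hypotheses on the sequence `(a_n)`: positivity and `∑ a_n < 1/4`. -/
def StdHyp (a : ℕ → ℝ) : Prop :=
  (∀ n : ℕ, 1 ≤ n → 0 < a n) ∧ Summable (fun n : ℕ => a (n + 1)) ∧
    (∑' n : ℕ, a (n + 1)) < 1 / 4

/-- `T : [0,1) → [0,1)` has the maps `v_n, w_n` (`n ≥ 1`) and `u_j` (`1 ≤ j ≤ N`)
as inverse branches. -/
def InverseBranches (a : ℕ → ℝ) (N : ℕ) (T : ℝ → ℝ) : Prop :=
  MapsTo T (Ico (0:ℝ) 1) (Ico (0:ℝ) 1) ∧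
    ∀ x ∈ Ico (0:ℝ) 1,
      (∀ n : ℕ, 1 ≤ n → T (v a n x) = x ∧ T (w a n x) = x) ∧
      (∀ j : ℕ, 1 ≤ j → j ≤ N → T (u a N j x) = x)

open Real

lemma hasDerivAt_two_mul_add_sin_div {ω : ℝ} (hω : ω ≠ 0) (t : ℝ) :
    HasDerivAt (fun s => 2 * s + sin (2 * ω * s) / (2 * ω)) (1 + 2 * cos (ω * t) ^ 2) t := by
  have hlin : HasDerivAt (fun s => 2 * ω * s) (2 * ω) t := by
    simpa using (hasDerivAt_id' t).const_mul (2 * ω)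
  refine (((hasDerivAt_id' t).const_mul 2).add (hlin.sin.div_const (2 * ω))).congr_deriv ?_
  rw [show 2 * ω * t = 2 * (ω * t) by ring, cos_two_mul]
  field_simp
  ring

lemma hasDerivAt_two_mul_sub_sin_div {ω : ℝ} (hω : ω ≠ 0) (t : ℝ) :
    HasDerivAt (fun s => 2 * s - sin (2 * ω * s) / (2 * ω)) (1 + 2 * sin (ω * t) ^ 2) t := by
  have hlin : HasDerivAt (fun s => 2 * ω * s) (2 * ω) t := by
    simpa using (hasDerivAt_id' t).const_mul (2 * ω)
  refine (((hasDerivAt_id' t).const_mul 2).sub (hlin.sin.div_const (2 * ω))).congr_deriv ?_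
  rw [show 2 * ω * t = 2 * (ω * t) by ring, cos_two_mul, cos_sq']
  field_simp
  ring

lemma sin_two_mul_two_pi_mul_pow (n : ℕ) : sin (2 * (2 * π * (n : ℝ) ^ 4) * 1) = 0 := by
  rw [show 2 * (2 * π * (n : ℝ) ^ 4) * 1 = ((4 * n ^ 4 : ℕ) : ℝ) * π by push_cast; ring]
  exact sin_nat_mul_pi _

lemma continuous_vd (a : ℕ → ℝ) (n : ℕ) : Continuous (vd a n) := by
  unfold vd; fun_prop

lemma continuous_wd (a : ℕ → ℝ) (n : ℕ) : Continuous (wd a n) := by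
  unfold wd; fun_prop

lemma integral_vd_zero_one (a : ℕ → ℝ) {n : ℕ} (hn : n ≠ 0) :
    ∫ t in (0:ℝ)..1, vd a n t = 2 * a n := by
  have hω : 2 * π * (n : ℝ) ^ 4 ≠ 0 := by positivity
  rw [intervalIntegral.integral_eq_sub_of_hasDerivAt (f' := vd a n)
    (fun t _ => (hasDerivAt_two_mul_add_sin_div hω t).const_mul (a n))
    ((continuous_vd a n).intervalIntegrable 0 1), sin_two_mul_two_pi_mul_pow]
  simp [mul_comm]

lemma integral_wd_zero_one (a : ℕ → ℝ) {n : ℕ} (hn : n ≠ 0) :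
    ∫ t in (0:ℝ)..1, wd a n t = 2 * a n := by
  have hω : 2 * π * (n : ℝ) ^ 4 ≠ 0 := by positivity
  rw [intervalIntegral.integral_eq_sub_of_hasDerivAt (f' := wd a n)
    (fun t _ => (hasDerivAt_two_mul_sub_sin_div hω t).const_mul (a n))
    ((continuous_wd a n).intervalIntegrable 0 1), sin_two_mul_two_pi_mul_pow]
  simp [mul_comm]

lemma hasDerivAt_v (a : ℕ → ℝ) (n : ℕ) (x : ℝ) : HasDerivAt (v a n) (vd a n x) x :=
  ((continuous_vd a n).integral_hasStrictDerivAt 0 x).hasDerivAt.const_add _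

lemma hasDerivAt_w (a : ℕ → ℝ) (n : ℕ) (x : ℝ) : HasDerivAt (w a n) (wd a n x) x :=
  ((continuous_wd a n).integral_hasStrictDerivAt 0 x).hasDerivAt.const_add _

variable {a : ℕ → ℝ} {N : ℕ}

lemma StdHyp.pos (ha : StdHyp a) (m : ℕ) : 0 < a (m + 1) := ha.1 _ m.succ_pos

lemma b_succ (a : ℕ → ℝ) (m : ℕ) : b a (m + 1) = b a m + 4 * a (m + 1) := by
  simp only [b, Finset.sum_range_succ]; ring

lemma b_nonneg (ha : StdHyp a) (m : ℕ) : 0 ≤ b a m :=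
  mul_nonneg zero_le_four (Finset.sum_nonneg fun k _ => (ha.pos k).le)

lemma b_mono (ha : StdHyp a) : Monotone (b a) :=
  monotone_nat_of_le_succ fun m => by rw [b_succ]; linarith [ha.pos m]

lemma b_le_binf (ha : StdHyp a) (m : ℕ) : b a m ≤ binf a :=
  mul_le_mul_of_nonneg_left (ha.2.1.sum_le_tsum _ fun k _ => (ha.pos k).le) zero_le_four

lemma binf_add_lenJ (a : ℕ → ℝ) : binf a + lenJ a = 1 := by
  unfold lenJ; ring

lemma lenJ_pos (ha : StdHyp a) : 0 < lenJ a := by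
  have := ha.2.2; unfold lenJ binf; linarith

lemma lenJ_div_pos (ha : StdHyp a) (hN : 1 ≤ N) : 0 < lenJ a / N :=
  div_pos (lenJ_pos ha) (by exact_mod_cast hN)

lemma strictMono_v (ha : StdHyp a) (m : ℕ) : StrictMono (v a (m + 1)) :=
  strictMono_of_hasDerivAt_pos (hasDerivAt_v a _) fun x => by
    unfold vd; have := ha.pos m; positivity

lemma strictMono_w (ha : StdHyp a) (m : ℕ) : StrictMono (w a (m + 1)) :=
  strictMono_of_hasDerivAt_pos (hasDerivAt_w a _) fun x => by
    unfold wd; have := ha.pos m; positivity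

lemma strictMono_u (ha : StdHyp a) (hN : 1 ≤ N) (j : ℕ) : StrictMono (u a N j) :=
  (strictMono_mul_left_of_pos (lenJ_div_pos ha hN)).const_add _

lemma mapsTo_v (ha : StdHyp a) (m : ℕ) :
    MapsTo (v a (m + 1)) (Ico 0 1) (Ico (b a m) (b a m + 2 * a (m + 1))) := by
  simpa [v, integral_vd_zero_one] using (strictMono_v ha m).mapsTo_Ico (a := 0) (b := 1)

lemma mapsTo_w (ha : StdHyp a) (m : ℕ) :
    MapsTo (w a (m + 1)) (Ico 0 1) (Ico (b a m + 2 * a (m + 1)) (b a (m + 1))) := by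
  have h := (strictMono_w ha m).mapsTo_Ico (a := 0) (b := 1)
  simp only [w, intervalIntegral.integral_same, add_zero, integral_wd_zero_one a m.succ_ne_zero,
    Nat.add_sub_cancel] at h
  rwa [b_succ, show b a m + 4 * a (m + 1) = b a m + 2 * a (m + 1) + 2 * a (m + 1) by ring]

lemma mapsTo_u (ha : StdHyp a) (hN : 1 ≤ N) (j : ℕ) :
    MapsTo (u a N (j + 1)) (Ico 0 1)
      (Ico (binf a + j * (lenJ a / N)) (binf a + (j + 1) * (lenJ a / N))) := by
  have h := (strictMono_u ha hN (j + 1)).mapsTo_Ico (a := 0) (b := 1)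
  simp only [u, Nat.cast_add, Nat.cast_one, add_sub_cancel_right, mul_zero, add_zero,
    mul_one] at h
  rwa [add_assoc, ← add_one_mul] at h

lemma v_mem_Ico_b (ha : StdHyp a) (m : ℕ) {x : ℝ} (hx : x ∈ Ico (0:ℝ) 1) :
    v a (m + 1) x ∈ Ico (b a m) (b a (m + 1)) := by
  obtain ⟨h₁, h₂⟩ := mapsTo_v ha m hx
  exact ⟨h₁, h₂.trans_le (by rw [b_succ]; linarith [ha.pos m])⟩

lemma w_mem_Ico_b (ha : StdHyp a) (m : ℕ) {x : ℝ} (hx : x ∈ Ico (0:ℝ) 1) :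
    w a (m + 1) x ∈ Ico (b a m) (b a (m + 1)) := by
  obtain ⟨h₁, h₂⟩ := mapsTo_w ha m hx
  exact ⟨le_trans (by linarith [ha.pos m]) h₁, h₂⟩

lemma mapsTo_u_one_Ico (ha : StdHyp a) (hN : 1 ≤ N) :
    MapsTo (u a N 1) (Ico 0 1) (Ico (binf a) (binf a + lenJ a / N)) := by
  simpa using mapsTo_u ha hN 0

lemma binf_add_mul_le_u (ha : StdHyp a) (hN : 1 ≤ N) (j : ℕ) {x : ℝ}
    (hx : x ∈ Ico (0:ℝ) 1) : binf a + j * (lenJ a / N) ≤ u a N (j + 1) x :=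
  (mapsTo_u ha hN j hx).1

lemma mapsTo_u_Ico_zero_one (ha : StdHyp a) (hN : 1 ≤ N) {j : ℕ} (hj : j < N) :
    MapsTo (u a N (j + 1)) (Ico 0 1) (Ico 0 1) := fun x hx => by
  obtain ⟨h₁, h₂⟩ := mapsTo_u ha hN j hx
  have hc := lenJ_div_pos ha hN
  have hjN : ((j : ℝ) + 1) * (lenJ a / N) ≤ N * (lenJ a / N) := by
    gcongr; exact_mod_cast hj
  rw [mul_div_cancel₀ _ (by positivity)] at hjN
  have := binf_add_lenJ a
  have := (b_nonneg ha 0).trans (b_le_binf ha 0)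
  exact ⟨by linarith [mul_nonneg j.cast_nonneg hc.le], by linarith⟩

lemma Ico_b_subset_Ico_zero_one (ha : StdHyp a) (m : ℕ) :
    Ico (b a m) (b a (m + 1)) ⊆ Ico 0 1 :=
  Ico_subset_Ico (b_nonneg ha m)
    ((b_le_binf ha _).trans (by linarith [binf_add_lenJ a, lenJ_pos ha]))

lemma LR_congr (ha : StdHyp a) (hN : 1 ≤ N) {f g : ℝ → ℝ} (hfg : EqOn f g (Ico 0 1)) :
    EqOn (LR a N f) (LR a N g) (Ico 0 1) := fun x hx => by
  unfold LR
  congr 1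
  · refine tsum_congr fun m => ?_
    rw [hfg (Ico_b_subset_Ico_zero_one ha m (v_mem_Ico_b ha m hx)),
      hfg (Ico_b_subset_Ico_zero_one ha m (w_mem_Ico_b ha m hx))]
  · exact congrArg _ (Finset.sum_congr rfl fun j hj =>
      hfg (mapsTo_u_Ico_zero_one ha hN (Finset.mem_range.1 hj) hx))

lemma iterate_LR_congr (ha : StdHyp a) (hN : 1 ≤ N) (k : ℕ) {f g : ℝ → ℝ}
    (hfg : EqOn f g (Ico 0 1)) : EqOn ((LR a N)^[k] f) ((LR a N)^[k] g) (Ico 0 1) := by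
  induction k generalizing f g with
  | zero => exact hfg
  | succ k ih => exact ih (LR_congr ha hN hfg)

lemma LR_const_mul (a : ℕ → ℝ) (N : ℕ) (c : ℝ) (f : ℝ → ℝ) :
    LR a N (fun y => c * f y) = fun x => c * LR a N f x := by
  ext x
  simp only [LR, mul_add, ← tsum_mul_left, Finset.mul_sum]
  congr 1
  · exact tsum_congr fun m => by ring
  · exact Finset.sum_congr rfl fun j _ => by ring

lemma iterate_LR_const_mul (a : ℕ → ℝ) (N : ℕ) (k : ℕ) (c : ℝ) (f : ℝ → ℝ) :
    (LR a N)^[k] (fun y => c * f y) = fun x => c * (LR a N)^[k] f x :=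
  Function.Commute.iterate_left (g := fun f y => c * f y) (fun f => LR_const_mul a N c f) k f

lemma LR_of_eq_zero_off_Ico_v (ha : StdHyp a) (hN : 1 ≤ N) (m : ℕ) {f : ℝ → ℝ}
    (hf : ∀ y ∉ Ico (b a m) (b a m + 2 * a (m + 1)), f y = 0) {x : ℝ}
    (hx : x ∈ Ico (0:ℝ) 1) : LR a N f x = vd a (m + 1) x * f (v a (m + 1) x) := by
  have hf' : ∀ y ∉ Ico (b a m) (b a (m + 1)), f y = 0 := fun y hy =>
    hf y fun h => hy ⟨h.1, h.2.trans_le (by rw [b_succ]; linarith [ha.pos m])⟩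
  have hw : f (w a (m + 1) x) = 0 := hf _ fun h => (mapsTo_w ha m hx).1.not_gt h.2
  have hother : ∀ m' ≠ m, f (v a (m' + 1) x) = 0 ∧ f (w a (m' + 1) x) = 0 := by
    intro m' hm'
    have hdisj := (b_mono ha).pairwise_disjoint_on_Ico_succ hm'
    simp only [Function.onFun, Order.succ_eq_add_one] at hdisj
    exact ⟨hf' _ (hdisj.notMem_of_mem_left (v_mem_Ico_b ha m' hx)),
      hf' _ (hdisj.notMem_of_mem_left (w_mem_Ico_b ha m' hx))⟩
  have hu : ∀ j ∈ Finset.range N, f (u a N (j + 1) x) = 0 := fun j _ =>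
    hf' _ fun h => h.2.not_ge <| (b_le_binf ha _).trans <|
      le_trans (le_add_of_nonneg_right (mul_nonneg j.cast_nonneg (lenJ_div_pos ha hN).le))
        (binf_add_mul_le_u ha hN j hx)
  rw [LR, tsum_eq_single m fun m' hm' => by simp [hother m' hm'], Finset.sum_eq_zero hu, hw]
  ring

lemma LR_of_eq_zero_off_Ico_u (ha : StdHyp a) (hN : 1 ≤ N) {f : ℝ → ℝ}
    (hf : ∀ y ∉ Ico (binf a) (binf a + lenJ a / N), f y = 0) {x : ℝ}
    (hx : x ∈ Ico (0:ℝ) 1) : LR a N f x = lenJ a / N * f (u a N 1 x) := by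
  have hlow : ∀ y < binf a, f y = 0 := fun y hy => hf y fun h => h.1.not_gt hy
  have hvw : ∀ m, f (v a (m + 1) x) = 0 ∧ f (w a (m + 1) x) = 0 := fun m =>
    ⟨hlow _ ((v_mem_Ico_b ha m hx).2.trans_le (b_le_binf ha _)),
      hlow _ ((w_mem_Ico_b ha m hx).2.trans_le (b_le_binf ha _))⟩
  have hu : ∀ j ∈ Finset.range N, j ≠ 0 → f (u a N (j + 1) x) = 0 := fun j _ hj =>
    hf _ fun h => h.2.not_ge <| le_trans (by
      have : (1:ℝ) ≤ j := by exact_mod_cast Nat.one_le_iff_ne_zero.2 hj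
      nlinarith [lenJ_div_pos ha hN]) (binf_add_mul_le_u ha hN j hx)
  rw [LR, tsum_congr fun m => by rw [(hvw m).1, (hvw m).2], Finset.sum_eq_single_of_mem 0
    (Finset.mem_range.2 hN) hu]
  simp

lemma LR_indicator_image_v (ha : StdHyp a) (hN : 1 ≤ N) (m : ℕ) {x : ℝ}
    (hx : x ∈ Ico (0:ℝ) 1) :
    LR a N (indicator (v a (m + 1) '' Ico 0 1) fun _ => 1) x = vd a (m + 1) x := by
  rw [LR_of_eq_zero_off_Ico_v ha hN m (fun y hy => indicator_of_notMem
      (fun h => hy ((mapsTo_v ha m).image_subset h)) _) hx,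
    indicator_of_mem (mem_image_of_mem _ hx), mul_one]

lemma LR_indicator_image_u_one (ha : StdHyp a) (hN : 1 ≤ N) {S : Set ℝ}
    (hS : S ⊆ Ico 0 1) {x : ℝ} (hx : x ∈ Ico (0:ℝ) 1) :
    LR a N (indicator (u a N 1 '' S) fun _ => 1) x
      = lenJ a / N * indicator S (fun _ => 1) x := by
  rw [LR_of_eq_zero_off_Ico_u ha hN (fun y hy => indicator_of_notMem
      (fun h => hy (((mapsTo_u_one_Ico ha hN).mono_left hS).image_subset h)) _) hx,
    indicator_image (strictMono_u ha hN 1).injective]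
  rfl

lemma eqOn_iterate_LR_indicator (ha : StdHyp a) (hN : 1 ≤ N) (m j : ℕ) :
    EqOn ((LR a N)^[j + 1] (indicator ((u a N 1)^[j] '' (v a (m + 1) '' Ico 0 1)) fun _ => 1))
      (fun x => (lenJ a / N) ^ j * vd a (m + 1) x) (Ico 0 1) := by
  induction j with
  | zero => exact fun x hx => by simpa using LR_indicator_image_v ha hN m hx
  | succ j ih =>
    set V := v a (m + 1) '' Ico 0 1
    have hsub : (u a N 1)^[j] '' V ⊆ Ico 0 1 := by
      rw [← image_comp]
      exact (((mapsTo_u_Ico_zero_one ha hN (j := 0) hN).iterate j).comp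
        fun _ hx => Ico_b_subset_Ico_zero_one ha m (v_mem_Ico_b ha m hx)).image_subset
    intro x hx
    rw [Function.iterate_succ' (u a N 1), image_comp, Function.iterate_succ_apply,
      iterate_LR_congr ha hN (j + 1) (fun y hy => LR_indicator_image_u_one ha hN hsub hy) hx,
      iterate_LR_const_mul]
    beta_reduce
    rw [ih hx, pow_succ]
    ring

/-- with `χ_n` the characteristic function of `u_1^{k-1}(v_n([0,1)))`,
one has `(L^k χ_n)(x) = a_n (1 + 2cos²(2πn⁴x)) (|J|/N)^{k-1}` on `[0,1)`. -/
theorem stmt3 (a : ℕ → ℝ) (N : ℕ) (hN : 1 ≤ N) (ha : StdHyp a)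
    (k n : ℕ) (hk : 1 ≤ k) (hn : 1 ≤ n) :
    ∀ x ∈ Ico (0:ℝ) 1,
      (LR a N)^[k]
        (Set.indicator ((u a N 1)^[k - 1] '' (v a n '' Ico (0:ℝ) 1)) fun _ => (1:ℝ)) x
      = a n * (1 + 2 * Real.cos (2 * Real.pi * (n : ℝ) ^ 4 * x) ^ 2)
          * (lenJ a / N) ^ (k - 1) := by
  obtain ⟨j, rfl⟩ := Nat.exists_eq_add_of_le' hk
  obtain ⟨m, rfl⟩ := Nat.exists_eq_add_of_le' hn
  intro x hx
  rw [Nat.add_sub_cancel, eqOn_iterate_LR_indicator ha hN m j hx]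
  exact mul_comm _ _

end Gouezel
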